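/- arXiv:2104.12399 — 5 statements merged into one kernel-verified Lean document; each statement's English description precedes it below -/
import Mathlib

section
/- For any constants $p,q,r>0$, the function $f(x,y,z) = e^{qy}/(x^p z^r)$ is strictly convex on the domain $D_f = (0,\infty)\times\mathbb{R}\times(0,\infty)$. -/
/-!
Writing `x ^ p = exp (p log x)`, the function is `exp (q y - (p log x + r log z))`. The exponent is
convex, being linear in `y` minus the strictly concave `p log x + r log z`. Composing with the
strictly convex, strictly increasing `exp` gives strict convexity between two points, except
possibly when the exponent takes the same value at both; but then they differ in `(x, z)`
(equal `(x, z)` and equal exponents force equal `y`), so the exponent itself is strictly below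
its chord there.
-/

open Set Real

variable {E F : Type*} [AddCommGroup E] [Module ℝ E] [AddCommGroup F] [Module ℝ F]

theorem StrictConcaveOn.smul {s : Set E} {f : E → ℝ} {c : ℝ} (hc : 0 < c)
    (hf : StrictConcaveOn ℝ s f) : StrictConcaveOn ℝ s fun x => c • f x := by
  refine ⟨hf.1, fun x hx y hy hxy a b ha hb hab => ?_⟩
  have h := mul_lt_mul_of_pos_left (hf.2 hx hy hxy ha hb hab) hc
  simp only [smul_eq_mul] at h ⊢
  linarith

theorem StrictConcaveOn.prod_add {s₁ : Set E} {s₂ : Set F} {f₁ : E → ℝ} {f₂ : F → ℝ}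
    (h₁ : StrictConcaveOn ℝ s₁ f₁) (h₂ : StrictConcaveOn ℝ s₂ f₂) :
    StrictConcaveOn ℝ (s₁ ×ˢ s₂) fun v => f₁ v.1 + f₂ v.2 := by
  refine ⟨h₁.1.prod h₂.1, ?_⟩
  rintro ⟨x₁, z₁⟩ ⟨hx₁, hz₁⟩ ⟨x₂, z₂⟩ ⟨hx₂, hz₂⟩ hne a b ha hb hab
  simp only [Prod.smul_mk, Prod.mk_add_mk]
  rw [smul_add, smul_add, add_add_add_comm]
  rcases not_and_or.1 (mt Prod.ext_iff.2 hne) with hx | hz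
  · exact add_lt_add_of_lt_of_le (h₁.2 hx₁ hx₂ hx ha hb hab)
      (h₂.concaveOn.2 hz₁ hz₂ ha.le hb.le hab)
  · exact add_lt_add_of_le_of_lt (h₁.concaveOn.2 hx₁ hx₂ ha.le hb.le hab)
      (h₂.2 hz₁ hz₂ hz ha hb hab)

/-- Unlike `StrictConvexOn.comp_convexOn`, `f` need not be injective on `s`: `hf'` supplies the
strictness where `f` takes equal values. -/
theorem StrictConvexOn.comp_convexOn_of_strict_of_eq {s : Set E} {t : Set ℝ} {f : E → ℝ}
    {g : ℝ → ℝ} (hg : StrictConvexOn ℝ t g) (hf : ConvexOn ℝ s f) (hg' : StrictMonoOn g t)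
    (hst : MapsTo f s t)
    (hf' : ∀ x ∈ s, ∀ y ∈ s, x ≠ y → f x = f y → ∀ a b : ℝ, 0 < a → 0 < b → a + b = 1 →
      f (a • x + b • y) < a • f x + b • f y) :
    StrictConvexOn ℝ s (g ∘ f) := by
  refine ⟨hf.1, fun x hx y hy hxy a b ha hb hab => ?_⟩
  have hcomb : a • f x + b • f y ∈ t := hg.1 (hst hx) (hst hy) ha.le hb.le hab
  have hfxy := hst (hf.1 hx hy ha.le hb.le hab)
  by_cases heq : f x = f y
  · calc g (f (a • x + b • y)) < g (a • f x + b • f y) :=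
          hg' hfxy hcomb (hf' x hx y hy hxy heq a b ha hb hab)
      _ = a • g (f x) + b • g (f y) := by
          rw [← heq, ← add_smul, ← add_smul, hab, one_smul, one_smul]
  · calc g (f (a • x + b • y)) ≤ g (a • f x + b • f y) :=
          hg'.monotoneOn hfxy hcomb (hf.2 hx hy ha.le hb.le hab)
      _ < a • g (f x) + b • g (f y) := hg.2 (hst hx) (hst hy) heq ha hb hab

theorem strictConvexOn_exp_sub_comp_linearMap (ℓ : E →ₗ[ℝ] ℝ) (P : E →ₗ[ℝ] F) {t : Set F}
    {ψ : F → ℝ} (hψ : StrictConcaveOn ℝ t ψ) (hinj : ∀ w, ℓ w = 0 → P w = 0 → w = 0) :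
    StrictConvexOn ℝ (P ⁻¹' t) fun w => exp (ℓ w - ψ (P w)) := by
  have hconv : ConvexOn ℝ (P ⁻¹' t) fun w => ℓ w - ψ (P w) :=
    (ℓ.convexOn (hψ.1.linear_preimage P)).sub (hψ.concaveOn.comp_linearMap P)
  refine strictConvexOn_exp.comp_convexOn_of_strict_of_eq hconv (exp_strictMono.strictMonoOn univ)
    (mapsTo_univ _ _) ?_
  intro w₁ h₁ w₂ h₂ hne heq a b ha hb hab
  have hP : P w₁ ≠ P w₂ := by
    intro hP
    have hℓ : ℓ w₁ = ℓ w₂ := by simpa [hP] using heq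
    exact hne (sub_eq_zero.1 (hinj _ (by simp [hℓ]) (by simp [hP])))
  have h := hψ.2 h₁ h₂ hP ha hb hab
  simp only [map_add, map_smul, smul_eq_mul] at h ⊢
  nlinarith

/-- For constants `p, q, r > 0`, the function `f(x,y,z) = e^{qy} / (x^p z^r)` is
strictly convex on `(0,∞) × ℝ × (0,∞)`. -/
theorem stmt1 (p q r : ℝ) (hp : 0 < p) (hq : 0 < q) (hr : 0 < r) :
    StrictConvexOn ℝ ((Ioi (0:ℝ)) ×ˢ ((univ : Set ℝ) ×ˢ Ioi (0:ℝ)))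
      (fun w : ℝ × ℝ × ℝ => Real.exp (q * w.2.1) / (w.1 ^ p * w.2.2 ^ r)) := by
  let P : ℝ × ℝ × ℝ →ₗ[ℝ] ℝ × ℝ :=
    (LinearMap.fst ℝ ℝ (ℝ × ℝ)).prod (LinearMap.snd ℝ ℝ ℝ ∘ₗ LinearMap.snd ℝ ℝ (ℝ × ℝ))
  let ℓ : ℝ × ℝ × ℝ →ₗ[ℝ] ℝ := q • (LinearMap.fst ℝ ℝ ℝ ∘ₗ LinearMap.snd ℝ ℝ (ℝ × ℝ))
  have hψ : StrictConcaveOn ℝ (Ioi 0 ×ˢ Ioi 0) fun v : ℝ × ℝ => p • log v.1 + r • log v.2 :=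
    (strictConcaveOn_log_Ioi.smul hp).prod_add (strictConcaveOn_log_Ioi.smul hr)
  have hinj : ∀ w, ℓ w = 0 → P w = 0 → w = 0 := by
    rintro ⟨x, y, z⟩ hℓ hP
    simp_all [ℓ, P, hq.ne']
  have hdom : P ⁻¹' (Ioi 0 ×ˢ Ioi 0) = Ioi (0:ℝ) ×ˢ ((univ : Set ℝ) ×ˢ Ioi (0:ℝ)) := by
    ext ⟨x, y, z⟩
    simp [P]
  have h := strictConvexOn_exp_sub_comp_linearMap ℓ P hψ hinj
  rw [hdom] at h
  refine h.congr ?_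
  rintro ⟨x, y, z⟩ ⟨hx, -, hz⟩
  simp only [mem_Ioi] at hx hz
  show exp _ = exp (q * y) / (x ^ p * z ^ r)
  rw [rpow_def_of_pos hx, rpow_def_of_pos hz, ← exp_add, ← exp_sub]
  simp [ℓ, P]
  ring_nf
end

section
/- For any constants $p,q,r>0$, the function $f(x,y,z_1,z_2) = e^{qy}/(x^p z_1^r z_2^r)$ is strictly convex on $(0,\infty)\times\mathbb{R}\times(0,\infty)\times(0,\infty)$. -/
open Set Real

/-! On the domain the function is `exp ∘ G` with
`G(x, y, z₁, z₂) = q y - p log x - r log z₁ - r log z₂`. By strict concavity of `log`, `G` lies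
strictly below its chords unless the chord moves only in `y`; there `G` is affine with slope
`q ≠ 0`, so a chord joining two points of a level set of `G` is always strict. Composing with `exp`
keeps strictness: through strict convexity of `exp` on chords where `G` is nonconstant, and through
strict monotonicity of `exp` on level chords. -/

section Composition

variable {𝕜 E β γ : Type*} [Semiring 𝕜] [PartialOrder 𝕜] [AddCommMonoid E] [SMul 𝕜 E]
  [AddCommMonoid β] [PartialOrder β] [Module 𝕜 β] [AddCommMonoid γ] [PartialOrder γ] [Module 𝕜 γ]
  {s : Set E} {t : Set β} {f : E → β} {g : β → γ}

/-- A variant of `StrictConvexOn.comp_convexOn` in which injectivity of `f` is replaced by strict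
convexity of `f` along the chords joining points of a common level set. -/
theorem StrictConvexOn.comp_convexOn_of_lt_on_level (hg : StrictConvexOn 𝕜 t g)
    (hg' : StrictMonoOn g t) (hf : ConvexOn 𝕜 s f) (hst : MapsTo f s t)
    (hf' : ∀ ⦃x⦄, x ∈ s → ∀ ⦃y⦄, y ∈ s → x ≠ y → f x = f y → ∀ ⦃a b : 𝕜⦄, 0 < a → 0 < b →
      a + b = 1 → f (a • x + b • y) < a • f x + b • f y) :
    StrictConvexOn 𝕜 s (g ∘ f) := by
  refine ⟨hf.1, fun x hx y hy hxy a b ha hb hab => ?_⟩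
  have hfx := hst hx
  have hfy := hst hy
  have hmid := hst (hf.1 hx hy ha.le hb.le hab)
  have hchord := hg.1 hfx hfy ha.le hb.le hab
  by_cases hlevel : f x = f y
  · calc g (f (a • x + b • y)) < g (a • f x + b • f y) :=
          hg' hmid hchord (hf' hx hy hxy hlevel ha hb hab)
      _ ≤ a • g (f x) + b • g (f y) := hg.convexOn.2 hfx hfy ha.le hb.le hab
  · calc g (f (a • x + b • y)) ≤ g (a • f x + b • f y) :=
          hg'.monotoneOn hmid hchord (hf.2 hx hy ha.le hb.le hab)
      _ < a • g (f x) + b • g (f y) := hg.2 hfx hfy hlevel ha hb hab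

end Composition

section LogJensenGap

noncomputable def logJensenGap (a b x y : ℝ) : ℝ := log (a * x + b * y) - (a * log x + b * log y)

variable {a b x y : ℝ}

theorem logJensenGap_nonneg (hx : 0 < x) (hy : 0 < y) (ha : 0 ≤ a) (hb : 0 ≤ b) (hab : a + b = 1) :
    0 ≤ logJensenGap a b x y := by
  have := strictConcaveOn_log_Ioi.concaveOn.2 (mem_Ioi.2 hx) (mem_Ioi.2 hy) ha hb hab
  simp only [smul_eq_mul] at this
  exact sub_nonneg.2 this

theorem logJensenGap_pos (hx : 0 < x) (hy : 0 < y) (hxy : x ≠ y) (ha : 0 < a) (hb : 0 < b)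
    (hab : a + b = 1) : 0 < logJensenGap a b x y := by
  have := strictConcaveOn_log_Ioi.2 (mem_Ioi.2 hx) (mem_Ioi.2 hy) hxy ha hb hab
  simp only [smul_eq_mul] at this
  exact sub_pos.2 this

end LogJensenGap

section LogPotential

noncomputable def logPotential (p q r : ℝ) (w : ℝ × ℝ × ℝ × ℝ) : ℝ :=
  q * w.2.1 - p * log w.1 - r * log w.2.2.1 - r * log w.2.2.2

variable {p q r : ℝ}

theorem exp_logPotential {w : ℝ × ℝ × ℝ × ℝ} (hx : 0 < w.1) (hz₁ : 0 < w.2.2.1)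
    (hz₂ : 0 < w.2.2.2) :
    exp (logPotential p q r w) = exp (q * w.2.1) / (w.1 ^ p * w.2.2.1 ^ r * w.2.2.2 ^ r) := by
  rw [rpow_def_of_pos hx, rpow_def_of_pos hz₁, rpow_def_of_pos hz₂, ← exp_add, ← exp_add,
    ← exp_sub, logPotential]
  ring_nf

theorem logPotential_smul_add (a b : ℝ) (u v : ℝ × ℝ × ℝ × ℝ) :
    logPotential p q r (a • u + b • v) = a * logPotential p q r u + b * logPotential p q r v -
      (p * logJensenGap a b u.1 v.1 + r * logJensenGap a b u.2.2.1 v.2.2.1 +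
        r * logJensenGap a b u.2.2.2 v.2.2.2) := by
  simp only [logPotential, logJensenGap, Prod.fst_add, Prod.snd_add, Prod.smul_fst, Prod.smul_snd,
    smul_eq_mul]
  ring

theorem convexOn_logPotential (hp : 0 ≤ p) (hr : 0 ≤ r) :
    ConvexOn ℝ (Ioi (0:ℝ) ×ˢ univ ×ˢ Ioi (0:ℝ) ×ˢ Ioi (0:ℝ)) (logPotential p q r) := by
  refine ⟨(convex_Ioi 0).prod (convex_univ.prod ((convex_Ioi 0).prod (convex_Ioi 0))),
    fun u hu v hv a b ha hb hab => ?_⟩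
  simp only [mem_prod, mem_Ioi, mem_univ, true_and] at hu hv
  have h₁ := mul_nonneg hp (logJensenGap_nonneg hu.1 hv.1 ha hb hab)
  have h₂ := mul_nonneg hr (logJensenGap_nonneg hu.2.1 hv.2.1 ha hb hab)
  have h₃ := mul_nonneg hr (logJensenGap_nonneg hu.2.2 hv.2.2 ha hb hab)
  rw [logPotential_smul_add, smul_eq_mul, smul_eq_mul]
  linarith

theorem logPotential_smul_add_lt_of_eq (hp : 0 < p) (hq : q ≠ 0) (hr : 0 < r)
    {u v : ℝ × ℝ × ℝ × ℝ} (hu : u ∈ Ioi (0:ℝ) ×ˢ univ ×ˢ Ioi (0:ℝ) ×ˢ Ioi (0:ℝ))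
    (hv : v ∈ Ioi (0:ℝ) ×ˢ univ ×ˢ Ioi (0:ℝ) ×ˢ Ioi (0:ℝ)) (huv : u ≠ v)
    (heq : logPotential p q r u = logPotential p q r v) {a b : ℝ} (ha : 0 < a) (hb : 0 < b)
    (hab : a + b = 1) :
    logPotential p q r (a • u + b • v) < a * logPotential p q r u + b * logPotential p q r v := by
  simp only [mem_prod, mem_Ioi, mem_univ, true_and] at hu hv
  have hne : u.1 ≠ v.1 ∨ u.2.2.1 ≠ v.2.2.1 ∨ u.2.2.2 ≠ v.2.2.2 := by
    by_contra! ⟨h₁, h₂, h₃⟩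
    have hy : u.2.1 = v.2.1 := by
      simp only [logPotential, h₁, h₂, h₃, sub_left_inj] at heq
      exact mul_left_cancel₀ hq heq
    exact huv (Prod.ext h₁ (Prod.ext hy (Prod.ext h₂ h₃)))
  have h₁ := mul_nonneg hp.le (logJensenGap_nonneg hu.1 hv.1 ha.le hb.le hab)
  have h₂ := mul_nonneg hr.le (logJensenGap_nonneg hu.2.1 hv.2.1 ha.le hb.le hab)
  have h₃ := mul_nonneg hr.le (logJensenGap_nonneg hu.2.2 hv.2.2 ha.le hb.le hab)
  rw [logPotential_smul_add]
  rcases hne with h | h | h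
  · linarith [mul_pos hp (logJensenGap_pos hu.1 hv.1 h ha hb hab)]
  · linarith [mul_pos hr (logJensenGap_pos hu.2.1 hv.2.1 h ha hb hab)]
  · linarith [mul_pos hr (logJensenGap_pos hu.2.2 hv.2.2 h ha hb hab)]

end LogPotential

/-- For constants `p, q, r > 0`, the function
`f(x,y,z₁,z₂) = e^{qy} / (x^p z₁^r z₂^r)` is strictly convex on
`(0,∞) × ℝ × (0,∞) × (0,∞)`. -/
theorem stmt3 (p q r : ℝ) (hp : 0 < p) (hq : 0 < q) (hr : 0 < r) :
    StrictConvexOn ℝ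
      ((Ioi (0:ℝ)) ×ˢ ((univ : Set ℝ) ×ˢ ((Ioi (0:ℝ)) ×ˢ Ioi (0:ℝ))))
      (fun w : ℝ × ℝ × ℝ × ℝ =>
        Real.exp (q * w.2.1) / (w.1 ^ p * w.2.2.1 ^ r * w.2.2.2 ^ r)) := by
  have hexp : StrictConvexOn ℝ _ (exp ∘ logPotential p q r) :=
    strictConvexOn_exp.comp_convexOn_of_lt_on_level (exp_strictMono.strictMonoOn _)
      (convexOn_logPotential hp.le hr.le) (mapsTo_univ _ _)
      fun u hu v hv huv heq a b ha hb hab =>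
        logPotential_smul_add_lt_of_eq hp hq.ne' hr hu hv huv heq ha hb hab
  refine hexp.congr fun w hw => ?_
  simp only [mem_prod, mem_Ioi, mem_univ, true_and] at hw
  exact exp_logPotential hw.1 hw.2.1 hw.2.2
end

section
/- For any constants $p,q,r>0$ and $b>0$, the function $f(x,y,z) = e^{qy}/((x-b)^p x^r z^r)$ is strictly convex on the domain $D_f = (b,\infty)\times\mathbb{R}\times(0,\infty)$. -/
/-!
Write `f = exp ∘ g` with `g(x,y,z) = q y - (p log (x - b) + r log x + r log z)`. The bracket is
strictly concave in `(x, z)` and `q y` is linear and non-constant, so `g` is convex, and strictly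
convex between any two points where it takes the same value (they must differ in `(x, z)`).
Between points with different values of `g`, strict convexity of `exp` gives strictness; between
points on one level set, strict convexity of `g` does, since `exp` is strictly increasing.
-/

open Set Real

section Composition

variable {𝕜 E β γ : Type*} [Semiring 𝕜] [PartialOrder 𝕜] [AddCommMonoid E] [SMul 𝕜 E]
  [AddCommMonoid β] [PartialOrder β] [Module 𝕜 β] [AddCommMonoid γ] [PartialOrder γ] [Module 𝕜 γ]
  {s : Set E} {t : Set β} {f : E → β} {g : β → γ}

/-- `StrictConvexOn.comp_convexOn` with injectivity of `f` weakened to strictness on level sets. -/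
theorem StrictConvexOn.comp_convexOn_of_strict_on_fibers (hg : StrictConvexOn 𝕜 t g)
    (hg' : StrictMonoOn g t) (hf : ConvexOn 𝕜 s f) (hst : MapsTo f s t)
    (hlevel : ∀ ⦃x⦄, x ∈ s → ∀ ⦃y⦄, y ∈ s → x ≠ y → f x = f y → ∀ ⦃a b : 𝕜⦄, 0 < a → 0 < b →
      a + b = 1 → f (a • x + b • y) < a • f x + b • f y) :
    StrictConvexOn 𝕜 s (g ∘ f) := by
  refine ⟨hf.1, fun x hx y hy hxy a b ha hb hab ↦ ?_⟩
  have hmid : f (a • x + b • y) ∈ t := hst (hf.1 hx hy ha.le hb.le hab)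
  by_cases hfxy : f x = f y
  · have hlt := hlevel hx hy hxy hfxy ha hb hab
    rw [← hfxy, Convex.combo_self hab] at hlt
    calc g (f (a • x + b • y)) < g (f x) := hg' hmid (hst hx) hlt
      _ = a • g (f x) + b • g (f y) := by rw [← hfxy, Convex.combo_self hab]
  · calc g (f (a • x + b • y)) ≤ g (a • f x + b • f y) :=
          hg'.monotoneOn hmid (hg.1 (hst hx) (hst hy) ha.le hb.le hab) (hf.2 hx hy ha.le hb.le hab)
      _ < a • g (f x) + b • g (f y) := hg.2 (hst hx) (hst hy) hfxy ha hb hab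

end Composition

section Real

variable {E F : Type*} [AddCommGroup E] [Module ℝ E] [AddCommGroup F] [Module ℝ F]

theorem StrictConvexOn.exp_linearMap_add_comp {t : Set F} {φ : F → ℝ}
    (hφ : StrictConvexOn ℝ t φ) (ℓ : E →ₗ[ℝ] ℝ) (L : E →ₗ[ℝ] F)
    (hinj : Function.Injective (ℓ.prod L)) :
    StrictConvexOn ℝ (L ⁻¹' t) (fun x ↦ exp (ℓ x + φ (L x))) := by
  have hconv : ConvexOn ℝ (L ⁻¹' t) (fun x ↦ ℓ x + φ (L x)) :=
    (ℓ.convexOn (hφ.1.linear_preimage L)).add (hφ.convexOn.comp_linearMap L)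
  refine strictConvexOn_exp.comp_convexOn_of_strict_on_fibers (exp_strictMono.strictMonoOn _) hconv
    (mapsTo_univ _ _) fun x hx y hy hxy hfxy a b ha hb hab ↦ ?_
  -- on a level set, `L` separates points, so the strict convexity of `φ` applies
  have hL : L x ≠ L y := fun hL ↦ hxy <| hinj <| Prod.ext (by simpa [hL] using hfxy) hL
  have hφlt := hφ.2 hx hy hL ha hb hab
  simp only [map_add, map_smul, smul_eq_mul] at hφlt ⊢
  linarith

end Real

theorem StrictConcaveOn.add_prod {𝕜 E F β : Type*} [Semiring 𝕜] [PartialOrder 𝕜]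
    [AddCommMonoid E] [AddCommMonoid F] [Module 𝕜 E] [Module 𝕜 F]
    [AddCommMonoid β] [PartialOrder β] [IsOrderedCancelAddMonoid β] [Module 𝕜 β]
    {s : Set E} {t : Set F} {f : E → β} {g : F → β}
    (hf : StrictConcaveOn 𝕜 s f) (hg : StrictConcaveOn 𝕜 t g) :
    StrictConcaveOn 𝕜 (s ×ˢ t) fun u ↦ f u.1 + g u.2 := by
  refine ⟨hf.1.prod hg.1, ?_⟩
  rintro ⟨x₁, y₁⟩ ⟨hx₁, hy₁⟩ ⟨x₂, y₂⟩ ⟨hx₂, hy₂⟩ hne a b ha hb hab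
  simp only [Prod.smul_mk, Prod.mk_add_mk, smul_add]
  rw [add_add_add_comm]
  rcases eq_or_ne x₁ x₂ with rfl | hx
  · have hy : y₁ ≠ y₂ := fun hy ↦ hne (by rw [hy])
    exact add_lt_add_of_le_of_lt (hf.concaveOn.2 hx₁ hx₂ ha.le hb.le hab)
      (hg.2 hy₁ hy₂ hy ha hb hab)
  · exact add_lt_add_of_lt_of_le (hf.2 hx₁ hx₂ hx ha hb hab)
      (hg.concaveOn.2 hy₁ hy₂ ha.le hb.le hab)

theorem strictConcaveOn_const_mul_log_sub {c : ℝ} (hc : 0 < c) (b : ℝ) :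
    StrictConcaveOn ℝ (Ioi b) fun x ↦ c * log (x - b) := by
  refine ⟨convex_Ioi b, fun x hx y hy hxy a a' ha ha' haa' ↦ ?_⟩
  have hlog := strictConcaveOn_log_Ioi.2 (mem_Ioi.2 (sub_pos.2 hx)) (mem_Ioi.2 (sub_pos.2 hy))
    (sub_left_injective.ne hxy) ha ha' haa'
  have hcomb : a • (x - b) + a' • (y - b) = a • x + a' • y - b := by
    simp only [smul_eq_mul]; linear_combination -b * haa'
  rw [hcomb] at hlog
  simp only [smul_eq_mul] at hlog ⊢
  nlinarith

theorem strictConcaveOn_log_barrier {p r b : ℝ} (hp : 0 < p) (hr : 0 < r) (hb : 0 ≤ b) :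
    StrictConcaveOn ℝ (Ioi b ×ˢ Ioi 0)
      fun u : ℝ × ℝ ↦ p * log (u.1 - b) + r * log u.1 + r * log u.2 := by
  have hlog : StrictConcaveOn ℝ (Ioi 0) fun x ↦ r * log x := by
    simpa using strictConcaveOn_const_mul_log_sub hr 0
  exact ((strictConcaveOn_const_mul_log_sub hp b).add
    (hlog.subset (Ioi_subset_Ioi hb) (convex_Ioi b))).add_prod hlog

/-- For constants `p, q, r, b > 0`, the function
`f(x,y,z) = e^{qy} / ((x-b)^p x^r z^r)` is strictly convex on `(b,∞) × ℝ × (0,∞)`. -/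
theorem stmt4 (p q r b : ℝ) (hp : 0 < p) (hq : 0 < q) (hr : 0 < r) (hb : 0 < b) :
    StrictConvexOn ℝ ((Ioi b) ×ˢ ((univ : Set ℝ) ×ˢ Ioi (0:ℝ)))
      (fun w : ℝ × ℝ × ℝ =>
        Real.exp (q * w.2.1) / ((w.1 - b) ^ p * w.1 ^ r * w.2.2 ^ r)) := by
  let ℓ : ℝ × ℝ × ℝ →ₗ[ℝ] ℝ := q • (LinearMap.fst ℝ ℝ ℝ ∘ₗ LinearMap.snd ℝ ℝ (ℝ × ℝ))
  let L : ℝ × ℝ × ℝ →ₗ[ℝ] ℝ × ℝ :=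
    (LinearMap.fst ℝ ℝ (ℝ × ℝ)).prod (LinearMap.snd ℝ ℝ ℝ ∘ₗ LinearMap.snd ℝ ℝ (ℝ × ℝ))
  have hinj : Function.Injective (ℓ.prod L) := by
    rintro ⟨x, y, z⟩ ⟨x', y', z'⟩ h
    obtain ⟨hy, rfl, rfl⟩ : q * y = q * y' ∧ x = x' ∧ z = z' := by simpa [ℓ, L] using h
    rw [mul_left_cancel₀ hq.ne' hy]
  have hD : L ⁻¹' (Ioi b ×ˢ Ioi 0) = Ioi b ×ˢ (univ ×ˢ Ioi 0) := by ext; simp [L]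
  have h := (strictConcaveOn_log_barrier hp hr hb.le).neg.exp_linearMap_add_comp ℓ L hinj
  rw [hD] at h
  refine h.congr fun ⟨x, y, z⟩ ⟨hx, _, hz⟩ ↦ ?_
  have hxb : 0 < x - b := sub_pos.2 hx
  have hx0 : 0 < x := hb.trans hx
  change exp (q * y + -(p * log (x - b) + r * log x + r * log z)) = _
  rw [rpow_def_of_pos hxb, rpow_def_of_pos hx0, rpow_def_of_pos hz, ← exp_add, ← exp_add,
    ← exp_sub]
  ring_nf
end

section
/- The function $(F,Y) \mapsto \operatorname{tr}(F Y^{-1/2} F^\top)$ is jointly convex on $\mathbb{R}^{3\times 3} \times \mathcal{S}^3_{>0}$, where $\mathcal{S}^3_{>0}$ is the set of symmetric positive-definite $3\times 3$ real matrices, and for each fixed $Y\in\mathcal{S}^3_{>0}$ it is strictly convex in $F$. -/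
/-!
For `A ≻ 0`, completing the square gives
`tr (F A⁻¹ Fᵀ) = sup_X (2 tr (F Xᵀ) - tr (X A Xᵀ))`, the supremum being attained at `X = F A⁻¹`.
As a supremum of functions affine in `(F, A)`, this is jointly convex in `(F, A)` and antitone
in `A` for the Loewner order. The matrix square root is operator monotone and operator concave,
so substituting `A = √Y` keeps joint convexity. For fixed `Y`, `F ↦ tr (F (√Y)⁻¹ Fᵀ)` is a
positive-definite quadratic form, hence strictly convex.
-/

open Matrix Set

open scoped Classical in
/-- The inverse of the unique symmetric positive-semidefinite square root of `Y`
(junk value `0` when `Y` is not positive semidefinite). -/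
noncomputable def invSqrt (Y : Matrix (Fin 3) (Fin 3) ℝ) : Matrix (Fin 3) (Fin 3) ℝ :=
  if h : Y.PosSemidef then
    (h.1.eigenvectorUnitary.1 * diagonal ((↑) ∘ (√·) ∘ h.1.eigenvalues) *
      (star h.1.eigenvectorUnitary : Matrix (Fin 3) (Fin 3) ℝ))⁻¹ else 0

open scoped MatrixOrder

namespace Matrix

variable {m n : Type*}

lemma convex_setOf_posDef : Convex ℝ {A : Matrix n n ℝ | A.PosDef} := by
  intro A hA B hB a b ha hb hab
  rcases ha.eq_or_lt with rfl | ha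
  · simpa [show b = 1 by linarith] using hB
  · exact (hA.smul ha).add_posSemidef (hB.posSemidef.smul hb)

variable [Fintype m] [Fintype n]

lemma trace_mul_transpose_comm (X F : Matrix m n ℝ) : (X * Fᵀ).trace = (F * Xᵀ).trace := by
  rw [← trace_transpose, transpose_mul, transpose_transpose]

lemma trace_mul_mul_transpose_nonneg {M : Matrix n n ℝ} (hM : M.PosSemidef) (X : Matrix m n ℝ) :
    0 ≤ (X * M * Xᵀ).trace := by
  simpa using (hM.mul_mul_conjTranspose_same X).trace_nonneg

variable [DecidableEq n]

lemma trace_mul_mul_transpose_pos {M : Matrix n n ℝ} {X : Matrix m n ℝ} (hM : M.PosDef)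
    (hX : X ≠ 0) : 0 < (X * M * Xᵀ).trace := by
  set R := CFC.sqrt M
  have hR : R.PosDef := hM.isStrictlyPositive.sqrt.posDef
  have hXR : X * M * Xᵀ = X * R * (X * R)ᴴ := by
    rw [conjTranspose_mul, hR.1.eq, ← Matrix.mul_assoc, Matrix.mul_assoc X R R,
      CFC.sqrt_mul_sqrt_self M hM.posSemidef.nonneg, conjTranspose_eq_transpose_of_trivial]
  refine (trace_mul_mul_transpose_nonneg hM.posSemidef X).lt_of_ne' ?_
  rw [hXR, Ne, trace_mul_conjTranspose_self_eq_zero_iff]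
  intro h
  apply hX
  simpa [h] using (mul_nonsing_inv_cancel_right R X hR.det_pos.ne'.isUnit).symm

lemma two_mul_trace_sub_le {A : Matrix n n ℝ} (hA : A.PosDef) (F X : Matrix m n ℝ) :
    2 * (F * Xᵀ).trace - (X * A * Xᵀ).trace ≤ (F * A⁻¹ * Fᵀ).trace := by
  have hdet : IsUnit A.det := hA.det_pos.ne'.isUnit
  have hsq := trace_mul_mul_transpose_nonneg hA.posSemidef (X - F * A⁻¹)
  rw [transpose_sub, transpose_mul, transpose_nonsing_inv,
    (isHermitian_iff_isSymm.1 hA.1).eq] at hsq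
  simp only [Matrix.sub_mul, Matrix.mul_sub, Matrix.mul_assoc, trace_sub,
    mul_nonsing_inv_cancel_left _ _ hdet, nonsing_inv_mul_cancel_left _ _ hdet] at hsq ⊢
  rw [trace_mul_transpose_comm X F] at hsq
  linarith

lemma two_mul_trace_sub_eq {A : Matrix n n ℝ} (hA : A.PosDef) (F : Matrix m n ℝ) :
    2 * (F * (F * A⁻¹)ᵀ).trace - (F * A⁻¹ * A * (F * A⁻¹)ᵀ).trace = (F * A⁻¹ * Fᵀ).trace := by
  rw [nonsing_inv_mul_cancel_right _ _ hA.det_pos.ne'.isUnit, trace_mul_transpose_comm]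
  ring

lemma trace_mul_inv_mul_transpose_le_of_le {A B : Matrix n n ℝ} (hA : A.PosDef) (hAB : A ≤ B)
    (F : Matrix m n ℝ) : (F * B⁻¹ * Fᵀ).trace ≤ (F * A⁻¹ * Fᵀ).trace := by
  have hB : B.PosDef := by simpa using hA.add_posSemidef (le_iff.mp hAB)
  set X := F * B⁻¹
  have hgap := trace_mul_mul_transpose_nonneg (le_iff.mp hAB) X
  rw [Matrix.mul_sub, Matrix.sub_mul, trace_sub] at hgap
  calc (F * B⁻¹ * Fᵀ).trace = 2 * (F * Xᵀ).trace - (X * B * Xᵀ).trace :=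
        (two_mul_trace_sub_eq hB F).symm
    _ ≤ 2 * (F * Xᵀ).trace - (X * A * Xᵀ).trace := by linarith
    _ ≤ (F * A⁻¹ * Fᵀ).trace := two_mul_trace_sub_le hA F X

theorem convexOn_trace_mul_inv_mul_transpose :
    ConvexOn ℝ {P : Matrix m n ℝ × Matrix n n ℝ | P.2.PosDef}
      (fun P => (P.1 * P.2⁻¹ * P.1ᵀ).trace) := by
  have hdom : Convex ℝ {P : Matrix m n ℝ × Matrix n n ℝ | P.2.PosDef} :=
    fun P hP Q hQ a b ha hb hab => convex_setOf_posDef hP hQ ha hb hab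
  refine ⟨hdom, ?_⟩
  rintro ⟨F, A⟩ hA ⟨G, B⟩ hB a b ha hb hab
  have hC : (a • A + b • B).PosDef := convex_setOf_posDef hA hB ha hb hab
  set X := (a • F + b • G) * (a • A + b • B)⁻¹
  calc ((a • F + b • G) * (a • A + b • B)⁻¹ * (a • F + b • G)ᵀ).trace
      = 2 * ((a • F + b • G) * Xᵀ).trace - (X * (a • A + b • B) * Xᵀ).trace :=
        (two_mul_trace_sub_eq hC _).symm
    _ = a * (2 * (F * Xᵀ).trace - (X * A * Xᵀ).trace)
          + b * (2 * (G * Xᵀ).trace - (X * B * Xᵀ).trace) := by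
        simp only [Matrix.add_mul, Matrix.mul_add, smul_mul, Matrix.mul_smul, trace_add,
          trace_smul, smul_eq_mul]
        ring
    _ ≤ a * (F * A⁻¹ * Fᵀ).trace + b * (G * B⁻¹ * Gᵀ).trace := by
        gcongr
        · exact two_mul_trace_sub_le hA F X
        · exact two_mul_trace_sub_le hB G X

theorem strictConvexOn_trace_mul_mul_transpose {M : Matrix n n ℝ} (hM : M.PosDef) :
    StrictConvexOn ℝ univ (fun F : Matrix m n ℝ => (F * M * Fᵀ).trace) := by
  refine ⟨convex_univ, fun F _ G _ hFG a b ha hb hab => ?_⟩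
  have hgap : a * (F * M * Fᵀ).trace + b * (G * M * Gᵀ).trace
      - ((a • F + b • G) * M * (a • F + b • G)ᵀ).trace
      = a * b * ((F - G) * M * (F - G)ᵀ).trace := by
    obtain rfl : b = 1 - a := by linarith
    simp only [transpose_add, transpose_sub, transpose_smul, Matrix.add_mul, Matrix.mul_add,
      Matrix.sub_mul, Matrix.mul_sub, smul_mul, Matrix.mul_smul, trace_add, trace_sub, trace_smul,
      smul_eq_mul]
    ring
  have := mul_pos (mul_pos ha hb) (trace_mul_mul_transpose_pos hM (sub_ne_zero.2 hFG))
  simp only [smul_eq_mul]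
  linarith

/-- If `√B - √A` had an eigenvector `v` with eigenvalue `t < 0`, then
`0 ≤ vᵀ (B - A) v = t (vᵀ √B v + vᵀ √A v)` would force `√A v = √B v = 0`, hence `t v = 0`. -/
theorem sqrt_le_sqrt {A B : Matrix n n ℝ} (hA : 0 ≤ A) (hAB : A ≤ B) :
    CFC.sqrt A ≤ CFC.sqrt B := by
  have hB : 0 ≤ B := hA.trans hAB
  set SA := CFC.sqrt A
  set SB := CFC.sqrt B
  have hSA : SA.PosSemidef := (CFC.sqrt_nonneg A).posSemidef
  have hSB : SB.PosSemidef := (CFC.sqrt_nonneg B).posSemidef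
  have hD : (SB - SA).IsHermitian := hSB.1.sub hSA.1
  rw [le_iff, hD.posSemidef_iff_eigenvalues_nonneg]
  intro i
  by_contra! ht
  change hD.eigenvalues i < 0 at ht
  set t := hD.eigenvalues i
  set v : n → ℝ := ⇑(hD.eigenvectorBasis i)
  have hv : v ≠ 0 := fun h =>
    hD.eigenvectorBasis.orthonormal.ne_zero i (by ext j; exact congrFun h j)
  have hDv : (SB - SA) *ᵥ v = t • v := hD.mulVec_eigenvectorBasis i
  have hvD : v ᵥ* (SB - SA) = t • v := by
    rw [← (isHermitian_iff_isSymm.1 hD).eq, vecMul_transpose, hDv]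
  have hBA : B - A = SB * (SB - SA) + (SB - SA) * SA := by
    rw [Matrix.mul_sub, Matrix.sub_mul, CFC.sqrt_mul_sqrt_self B hB,
      CFC.sqrt_mul_sqrt_self A hA]
    abel
  have hquad : v ⬝ᵥ ((B - A) *ᵥ v) = t * (v ⬝ᵥ (SB *ᵥ v) + v ⬝ᵥ (SA *ᵥ v)) := by
    rw [hBA, add_mulVec, dotProduct_add, ← mulVec_mulVec, hDv, ← mulVec_mulVec,
      dotProduct_mulVec v (SB - SA), hvD, mulVec_smul, dotProduct_smul, smul_dotProduct]
    simp only [smul_eq_mul]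
    ring
  have hqBA : 0 ≤ v ⬝ᵥ ((B - A) *ᵥ v) := by
    simpa using (le_iff.1 hAB).dotProduct_mulVec_nonneg v
  have hqA : 0 ≤ v ⬝ᵥ (SA *ᵥ v) := by simpa using hSA.dotProduct_mulVec_nonneg v
  have hqB : 0 ≤ v ⬝ᵥ (SB *ᵥ v) := by simpa using hSB.dotProduct_mulVec_nonneg v
  have hsum : v ⬝ᵥ (SB *ᵥ v) + v ⬝ᵥ (SA *ᵥ v) ≤ 0 := by nlinarith
  have hSAv : SA *ᵥ v = 0 := (hSA.dotProduct_mulVec_zero_iff v).1 (by rw [star_trivial]; linarith)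
  have hSBv : SB *ᵥ v = 0 := (hSB.dotProduct_mulVec_zero_iff v).1 (by rw [star_trivial]; linarith)
  rw [sub_mulVec, hSAv, hSBv, sub_zero, eq_comm, smul_eq_zero] at hDv
  exact hDv.elim ht.ne hv

/-- With `S = a √Y + b √Z`, one has `a Y + b Z - S² = a b (√Y - √Z)² ≥ 0`, so
`S = √(S²) ≤ √(a Y + b Z)` by operator monotonicity. -/
theorem concaveOn_sqrt : ConcaveOn ℝ (Ici (0 : Matrix n n ℝ)) CFC.sqrt := by
  refine ⟨convex_Ici 0, fun Y (hY : 0 ≤ Y) Z (hZ : 0 ≤ Z) a b ha hb hab => ?_⟩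
  set S := a • CFC.sqrt Y + b • CFC.sqrt Z
  have hS : 0 ≤ S :=
    add_nonneg (smul_nonneg ha (CFC.sqrt_nonneg Y)) (smul_nonneg hb (CFC.sqrt_nonneg Z))
  have hgap : a • Y + b • Z - S ^ 2
      = (a * b) • ((CFC.sqrt Y - CFC.sqrt Z) * (CFC.sqrt Y - CFC.sqrt Z)) := by
    obtain rfl : b = 1 - a := by linarith
    rw [← CFC.sqrt_mul_sqrt_self Y hY, ← CFC.sqrt_mul_sqrt_self Z hZ, sq]
    simp only [S, Matrix.add_mul, Matrix.mul_add, Matrix.sub_mul, Matrix.mul_sub, smul_mul,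
      Matrix.mul_smul, CFC.sqrt_mul_sqrt_self Y hY, CFC.sqrt_mul_sqrt_self Z hZ]
    module
  have hS2 : S ^ 2 ≤ a • Y + b • Z := by
    rw [← sub_nonneg, hgap]
    exact smul_nonneg (mul_nonneg ha hb)
      ((IsSelfAdjoint.of_nonneg (CFC.sqrt_nonneg Y)).sub
        (IsSelfAdjoint.of_nonneg (CFC.sqrt_nonneg Z))).mul_self_nonneg
  calc S = CFC.sqrt (S ^ 2) := (CFC.sqrt_sq S hS).symm
    _ ≤ CFC.sqrt (a • Y + b • Z) := sqrt_le_sqrt (IsSelfAdjoint.of_nonneg hS).sq_nonneg hS2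

end Matrix

lemma invSqrt_eq_inv_sqrt {Y : Matrix (Fin 3) (Fin 3) ℝ} (hY : Y.PosSemidef) :
    invSqrt Y = (CFC.sqrt Y)⁻¹ := by
  rw [invSqrt, dif_pos hY, CFC.sqrt_eq_real_sqrt Y hY.nonneg,
    cfcₙ_eq_cfc (hf := Real.continuous_sqrt.continuousOn) (hf0 := Real.sqrt_zero), hY.1.cfc_eq,
    IsHermitian.cfc, Unitary.conjStarAlgAut_apply]
  rfl

/-- The function `(F, Y) ↦ tr(F Y^{-1/2} Fᵀ)` is jointly convex on
`ℝ^{3×3} × 𝒮³₊` and, for each fixed positive-definite `Y`, strictly convex in `F`. -/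
theorem stmt7 :
    ConvexOn ℝ {P : Matrix (Fin 3) (Fin 3) ℝ × Matrix (Fin 3) (Fin 3) ℝ | P.2.PosDef}
      (fun P => (P.1 * invSqrt P.2 * P.1ᵀ).trace) ∧
    ∀ Y : Matrix (Fin 3) (Fin 3) ℝ, Y.PosDef →
      StrictConvexOn ℝ (univ : Set (Matrix (Fin 3) (Fin 3) ℝ))
        (fun F => (F * invSqrt Y * Fᵀ).trace) := by
  have hsqrt {Y : Matrix (Fin 3) (Fin 3) ℝ} (hY : Y.PosDef) : (CFC.sqrt Y).PosDef :=
    hY.isStrictlyPositive.sqrt.posDef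
  refine ⟨⟨convexOn_trace_mul_inv_mul_transpose.1, ?_⟩, fun Y hY => ?_⟩
  · rintro ⟨F, Y⟩ (hY : Y.PosDef) ⟨G, Z⟩ (hZ : Z.PosDef) a b ha hb hab
    have hC : (a • Y + b • Z).PosDef := convex_setOf_posDef hY hZ ha hb hab
    simp only [Prod.smul_mk, Prod.mk_add_mk, smul_eq_mul, invSqrt_eq_inv_sqrt hY.posSemidef,
      invSqrt_eq_inv_sqrt hZ.posSemidef, invSqrt_eq_inv_sqrt hC.posSemidef]
    calc _ ≤ ((a • F + b • G) * (a • CFC.sqrt Y + b • CFC.sqrt Z)⁻¹ * (a • F + b • G)ᵀ).trace :=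
          trace_mul_inv_mul_transpose_le_of_le
            (convex_setOf_posDef (hsqrt hY) (hsqrt hZ) ha hb hab)
            (concaveOn_sqrt.2 hY.posSemidef.nonneg hZ.posSemidef.nonneg ha hb hab) _
      _ ≤ _ := convexOn_trace_mul_inv_mul_transpose.2 (x := (F, CFC.sqrt Y))
          (y := (G, CFC.sqrt Z)) (hsqrt hY) (hsqrt hZ) ha hb hab
  · simp only [invSqrt_eq_inv_sqrt hY.posSemidef]
    exact strictConvexOn_trace_mul_mul_transpose (hsqrt hY).inv
end

section
/- For constants $\alpha, k_B > 0$ and any symmetric positive-definite matrix $C\in\mathcal{S}^3_{>0}$, any $\theta>0$, $K(\theta)>0$, $\rho>0$, $\zeta>0$, $\kappa>0$ and any vector $q\in\mathbb{R}^3$, the entropy production $\xi = \frac{|q|^2}{\kappa\theta^2} + \frac{2\alpha\rho}{\zeta\theta}\operatorname{tr}\big((K(\theta)I - k_B\theta C^{-1})(K(\theta)C - k_B\theta I)\big)$ is nonnegative; moreover $\xi = \frac{|q|^2}{\kappa\theta^2} + \frac{2\alpha\rho}{\zeta\theta}\|K(\theta)C^{1/2} - k_B\theta C^{-1/2}\|^2$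 where $\|\cdot\|$ is the Frobenius norm. -/
open Matrix

/-! With `S = C^{1/2}`, symmetric with `S * S = C`, the matrix `(K I - kθ C⁻¹)(K C - kθ I)` factors
as `M * M` for the symmetric `M = K S - kθ S⁻¹`, so its trace is `tr (Mᵀ M) = ‖M‖²_F ≥ 0`. -/

/-- The square root of a positive semidefinite matrix, as `Matrix.PosSemidef.sqrt` was defined
in Mathlib of December 2024 (since removed in favour of `CFC.sqrt`). -/
noncomputable def posSemidefSqrtOld {n : Type*} [Fintype n]
    [DecidableEq n] {A : Matrix n n ℝ} (hA : A.PosSemidef) : Matrix n n ℝ :=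
  (hA.1.eigenvectorUnitary : Matrix n n ℝ) * diagonal ((RCLike.ofReal : ℝ → ℝ) ∘ Real.sqrt ∘ hA.1.eigenvalues) *
    (star hA.1.eigenvectorUnitary : Matrix n n ℝ)

section posSemidefSqrtOld

variable {n : Type*} [Fintype n] [DecidableEq n] {A : Matrix n n ℝ} (hA : A.PosSemidef)

theorem posSemidefSqrtOld_mul_self : posSemidefSqrtOld hA * posSemidefSqrtOld hA = A := by
  set U : Matrix n n ℝ := (hA.1.eigenvectorUnitary : Matrix n n ℝ)
  have hU : star U * U = 1 := Unitary.coe_star_mul_self hA.1.eigenvectorUnitary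
  have hsqrt : diagonal (Real.sqrt ∘ hA.1.eigenvalues) * diagonal (Real.sqrt ∘ hA.1.eigenvalues)
      = diagonal hA.1.eigenvalues := by
    rw [diagonal_mul_diagonal]
    congr 1
    funext i
    exact Real.mul_self_sqrt (hA.eigenvalues_nonneg i)
  calc posSemidefSqrtOld hA * posSemidefSqrtOld hA
      = U * (diagonal (Real.sqrt ∘ hA.1.eigenvalues) * (star U * U)
          * diagonal (Real.sqrt ∘ hA.1.eigenvalues)) * star U := by
        simp only [posSemidefSqrtOld, Matrix.mul_assoc]; rfl
    _ = A := by
        rw [hU, Matrix.mul_one, hsqrt]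
        conv_rhs => rw [hA.1.spectral_theorem, Unitary.conjStarAlgAut_apply]
        rfl

theorem posSemidefSqrtOld_transpose : (posSemidefSqrtOld hA)ᵀ = posSemidefSqrtOld hA := by
  simp only [posSemidefSqrtOld, transpose_mul, diagonal_transpose, Matrix.mul_assoc,
    star_eq_conjTranspose, conjTranspose_eq_transpose_of_trivial, transpose_transpose]

end posSemidefSqrtOld

theorem Matrix.trace_transpose_mul_self_eq_sum_sq {m n R : Type*} [Fintype m] [Fintype n]
    [CommSemiring R] (M : Matrix m n R) : (Mᵀ * M).trace = ∑ i, ∑ j, M i j ^ 2 := by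
  simp only [trace, diag, mul_apply, transpose_apply, sq]
  exact Finset.sum_comm

theorem Matrix.smul_one_sub_smul_inv_mul_smul_sub_smul_one {n R : Type*} [Fintype n]
    [DecidableEq n] [CommRing R] {S : Matrix n n R} (hS : IsUnit S.det) (a b : R) :
    (a • 1 - b • (S * S)⁻¹) * (a • (S * S) - b • 1) = (a • S - b • S⁻¹) * (a • S - b • S⁻¹) := by
  have hSS : S⁻¹ * S⁻¹ * (S * S) = 1 := by
    rw [Matrix.mul_assoc, nonsing_inv_mul_cancel_left _ _ hS, nonsing_inv_mul S hS]
  rw [mul_inv_rev]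
  simp only [Matrix.sub_mul, Matrix.mul_sub, smul_mul_assoc, mul_smul_comm, Matrix.one_mul,
    Matrix.mul_one, hSS, nonsing_inv_mul S hS, mul_nonsing_inv S hS]

theorem Matrix.PosDef.trace_smul_one_sub_smul_inv_mul_eq_sum_sq {n : Type*} [Fintype n]
    [DecidableEq n] {C : Matrix n n ℝ} (hC : C.PosDef) (a b : ℝ) :
    ((a • 1 - b • C⁻¹) * (a • C - b • 1)).trace
      = ∑ i, ∑ j, ((a • posSemidefSqrtOld hC.posSemidef
          - b • (posSemidefSqrtOld hC.posSemidef)⁻¹) i j) ^ 2 := by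
  set S := posSemidefSqrtOld hC.posSemidef
  have hSC : S * S = C := posSemidefSqrtOld_mul_self hC.posSemidef
  have hS : IsUnit S.det :=
    isUnit_of_mul_isUnit_left (by rw [← det_mul, hSC]; exact hC.isUnit.map detMonoidHom)
  have hM : (a • S - b • S⁻¹)ᵀ = a • S - b • S⁻¹ := by
    rw [transpose_sub, transpose_smul, transpose_smul, transpose_nonsing_inv,
      posSemidefSqrtOld_transpose]
  rw [← hSC, smul_one_sub_smul_inv_mul_smul_sub_smul_one hS, ← trace_transpose_mul_self_eq_sum_sq,
    hM]

theorem stmt10_general (α kB : ℝ) (hα : 0 < α)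
    (C : Matrix (Fin 3) (Fin 3) ℝ) (hC : C.PosDef)
    (θ Kθ ρ ζ κ : ℝ) (hθ : 0 < θ) (hρ : 0 < ρ) (hζ : 0 < ζ) (hκ : 0 < κ)
    (q : EuclideanSpace ℝ (Fin 3)) :
    0 ≤ ‖q‖ ^ 2 / (κ * θ ^ 2)
        + 2 * α * ρ / (ζ * θ)
          * ((Kθ • (1 : Matrix (Fin 3) (Fin 3) ℝ) - (kB * θ) • C⁻¹)
              * (Kθ • C - (kB * θ) • (1 : Matrix (Fin 3) (Fin 3) ℝ))).trace ∧
      ‖q‖ ^ 2 / (κ * θ ^ 2)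
          + 2 * α * ρ / (ζ * θ)
            * ((Kθ • (1 : Matrix (Fin 3) (Fin 3) ℝ) - (kB * θ) • C⁻¹)
                * (Kθ • C - (kB * θ) • (1 : Matrix (Fin 3) (Fin 3) ℝ))).trace
        = ‖q‖ ^ 2 / (κ * θ ^ 2)
            + 2 * α * ρ / (ζ * θ)
              * ∑ i, ∑ j,
                  ((Kθ • (posSemidefSqrtOld hC.posSemidef) - (kB * θ) • ((posSemidefSqrtOld hC.posSemidef))⁻¹) i j) ^ 2 := by
  rw [hC.trace_smul_one_sub_smul_inv_mul_eq_sum_sq]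
  exact ⟨by positivity, rfl⟩

/-- For constants `α, k_B > 0`, a symmetric positive-definite `C`, `θ > 0`,
`K θ > 0`, `ρ, ζ, κ > 0` and `q ∈ ℝ³`, the entropy production
`ξ = |q|²/(κθ²) + (2αρ/(ζθ)) tr((K(θ)I - k_B θ C⁻¹)(K(θ)C - k_B θ I))`
is nonnegative, and equals
`|q|²/(κθ²) + (2αρ/(ζθ)) ‖K(θ) C^{1/2} - k_B θ C^{-1/2}‖²` (Frobenius norm). -/
theorem stmt10 (α kB : ℝ) (hα : 0 < α) (hkB : 0 < kB)
    (C : Matrix (Fin 3) (Fin 3) ℝ) (hC : C.PosDef)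
    (θ Kθ ρ ζ κ : ℝ) (hθ : 0 < θ) (hK : 0 < Kθ) (hρ : 0 < ρ) (hζ : 0 < ζ) (hκ : 0 < κ)
    (q : EuclideanSpace ℝ (Fin 3)) :
    0 ≤ ‖q‖ ^ 2 / (κ * θ ^ 2)
        + 2 * α * ρ / (ζ * θ)
          * ((Kθ • (1 : Matrix (Fin 3) (Fin 3) ℝ) - (kB * θ) • C⁻¹)
              * (Kθ • C - (kB * θ) • (1 : Matrix (Fin 3) (Fin 3) ℝ))).trace ∧
      ‖q‖ ^ 2 / (κ * θ ^ 2)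
          + 2 * α * ρ / (ζ * θ)
            * ((Kθ • (1 : Matrix (Fin 3) (Fin 3) ℝ) - (kB * θ) • C⁻¹)
                * (Kθ • C - (kB * θ) • (1 : Matrix (Fin 3) (Fin 3) ℝ))).trace
        = ‖q‖ ^ 2 / (κ * θ ^ 2)
            + 2 * α * ρ / (ζ * θ)
              * ∑ i, ∑ j,
                  ((Kθ • (posSemidefSqrtOld hC.posSemidef) - (kB * θ) • ((posSemidefSqrtOld hC.posSemidef))⁻¹) i j) ^ 2 :=
  stmt10_general α kB hα C hC θ Kθ ρ ζ κ hθ hρ hζ hκ q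
end
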